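/- arXiv:math/0407524 — 4 statements merged into one kernel-verified Lean document; each statement's English description precedes it below -/
import Mathlib

section
/- With the notation of the Gaudin model, the Gaudin Hamiltonians commute pairwise: [Ξ_i, Ξ_j] = 0 for all i, j = 1,...,N. -/
open scoped TensorProduct

noncomputable section

/-- `A^{(i)}`: the element of `U(g)^{⊗N}` with `x` in the `i`-th slot and `1` elsewhere. -/
def slot {L : Type*} [LieRing L] [LieAlgebra ℂ L] (N : ℕ) (i : Fin N)
    (x : UniversalEnvelopingAlgebra ℂ L) :
    ⨂[ℂ] _ : Fin N, UniversalEnvelopingAlgebra ℂ L :=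
  PiTensorProduct.tprod ℂ
    (Function.update (fun _ => (1 : UniversalEnvelopingAlgebra ℂ L)) i x)

/-- The image `A^{(i)}` of `A ∈ g` in the `i`-th slot of `U(g)^{⊗N}`. -/
def slotL {L : Type*} [LieRing L] [LieAlgebra ℂ L] (N : ℕ) (i : Fin N) (A : L) :
    ⨂[ℂ] _ : Fin N, UniversalEnvelopingAlgebra ℂ L :=
  slot N i (UniversalEnvelopingAlgebra.ι ℂ A)

/-- The Gaudin Hamiltonian `Ξ_i = Σ_{j≠i} Σ_a J_a^{(i)} J^{a(j)} / (z_i - z_j)`. -/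
def gaudin {L : Type*} [LieRing L] [LieAlgebra ℂ L] (N d : ℕ) (z : Fin N → ℂ)
    (J J' : Fin d → L) (i : Fin N) :
    ⨂[ℂ] _ : Fin N, UniversalEnvelopingAlgebra ℂ L :=
  ∑ j ∈ Finset.univ.erase i, ∑ a : Fin d,
    (z i - z j)⁻¹ • (slotL N i (J a) * slotL N j (J' a))

/-!
Write `Ω i j = ∑ a, J a ^(i) * J' a ^(j)`. Invariance of `κ` makes `Ω i j` commute with
`x^(i) + x^(j)` for every `x ∈ g`, which gives the infinitesimal braid relations
`[Ω i j, Ω i k + Ω j k] = 0`; moreover `Ω i j = Ω j i`, and `Ω`'s on disjoint pairs of sites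
commute. These relations collapse `[Ξ i, Ξ j]` to a sum over the third sites `m` of
`[Ω i m, Ω i j]` times `1/((z j - z i)(z i - z m)) + 1/((z j - z m)(z i - z j)) -
1/((z j - z m)(z i - z m))`, which vanishes by partial fractions.
-/

open Finset

attribute [local instance] LieRing.ofAssociativeRing

section DualBases

variable {R L M β : Type*} [CommRing R] [AddCommGroup L] [Module R L] [AddCommGroup M]
  [Module R M] [Fintype β] [DecidableEq β] {κ : LinearMap.BilinForm R L}
  (J : Module.Basis β R L) {J' : β → L}

lemma map_eq_sum_apply_dual_smul (hdual : ∀ a b, κ (J a) (J' b) = if a = b then (1 : R) else 0)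
    (g : L →ₗ[R] M) (x : L) : g x = ∑ a, κ x (J' a) • g (J a) := by
  have hcoord : ∀ a, κ x (J' a) = J.repr x a := fun a => by
    change κ.flip (J' a) x = J.coord a x
    congr 1
    exact J.ext fun b => by simp [hdual, Finsupp.single_apply]
  simp only [hcoord, ← map_smul, ← map_sum, J.sum_repr]

lemma map_eq_sum_basis_apply_smul (hnd : κ.Nondegenerate)
    (hdual : ∀ a b, κ (J a) (J' b) = if a = b then (1 : R) else 0)
    (g : L →ₗ[R] M) (x : L) : g x = ∑ a, κ (J a) x • g (J' a) := by
  have hflip : κ.flip (∑ a, κ (J a) x • J' a - x) = 0 := J.ext fun b => by simp [hdual]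
  have hx : ∑ a, κ (J a) x • J' a = x :=
    sub_eq_zero.1 <| hnd.2 _ fun y => LinearMap.congr_fun hflip y
  simp only [← map_smul, ← map_sum, hx]

lemma sum_casimir_swap (hsymm : ∀ x y, κ x y = κ y x)
    (hdual : ∀ a b, κ (J a) (J' b) = if a = b then (1 : R) else 0) (f : L →ₗ[R] L →ₗ[R] M) :
    ∑ a, f (J a) (J' a) = ∑ a, f (J' a) (J a) :=
  calc ∑ a, f (J a) (J' a) = ∑ a, ∑ b, κ (J' a) (J' b) • f (J a) (J b) :=
        sum_congr rfl fun a _ => map_eq_sum_apply_dual_smul J hdual (f (J a)) (J' a)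
    _ = ∑ a, ∑ b, κ (J' a) (J' b) • f (J b) (J a) :=
        sum_comm.trans <| sum_congr rfl fun a _ => sum_congr rfl fun b _ => by rw [hsymm]
    _ = ∑ a, f (J' a) (J a) := sum_congr rfl fun a _ =>
        (map_eq_sum_apply_dual_smul J hdual (f.flip (J a)) (J' a)).symm

end DualBases

lemma sum_lie_casimir_eq_zero {R L M β : Type*} [CommRing R] [LieRing L] [LieAlgebra R L]
    [AddCommGroup M] [Module R M] [Fintype β] [DecidableEq β] {κ : LinearMap.BilinForm R L}
    (J : Module.Basis β R L) {J' : β → L} (hinv : ∀ x y w, κ ⁅x, y⁆ w = κ x ⁅y, w⁆)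
    (hnd : κ.Nondegenerate) (hdual : ∀ a b, κ (J a) (J' b) = if a = b then (1 : R) else 0)
    (f : L →ₗ[R] L →ₗ[R] M) (A : L) :
    ∑ a, f ⁅A, J a⁆ (J' a) + ∑ a, f (J a) ⁅A, J' a⁆ = 0 := by
  have hκ : ∀ a b, κ ⁅A, J a⁆ (J' b) = -κ (J a) ⁅A, J' b⁆ := fun a b => by
    rw [← hinv, ← lie_skew, map_neg, LinearMap.neg_apply]
  calc ∑ a, f ⁅A, J a⁆ (J' a) + ∑ a, f (J a) ⁅A, J' a⁆
      = ∑ a, ∑ b, κ ⁅A, J a⁆ (J' b) • f (J b) (J' a)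
          + ∑ a, ∑ b, κ (J b) ⁅A, J' a⁆ • f (J a) (J' b) := by
        congr 1 <;> refine sum_congr rfl fun a _ => ?_
        · exact map_eq_sum_apply_dual_smul J hdual (f.flip (J' a)) _
        · exact map_eq_sum_basis_apply_smul J hnd hdual (f (J a)) _
    _ = 0 := by
        rw [sum_comm (f := fun a b => κ (J b) ⁅A, J' a⁆ • f (J a) (J' b)), ← sum_add_distrib]
        simp [hκ]

lemma Ring.lie_mul {A : Type*} [Ring A] (a b c : A) : ⁅a, b * c⁆ = ⁅a, b⁆ * c + b * ⁅a, c⁆ := by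
  simp only [Ring.lie_def]
  noncomm_ring

section Casimir

variable {R L T ι β : Type*} [CommRing R] [LieRing L] [LieAlgebra R L] [Ring T] [Algebra R T]
  [Fintype β] (ρ : ι → L →ₗ⁅R⁆ T)

def casimir (J J' : β → L) (i j : ι) : T := ∑ a, ρ i (J a) * ρ j (J' a)

variable {ρ}

lemma commute_casimir_of_ne (hρ : Pairwise fun i j => ∀ x y, Commute (ρ i x) (ρ j y))
    (J J' : β → L) {i j k : ι} (hik : i ≠ k) (hjk : j ≠ k) (x : L) :
    Commute (casimir ρ J J' i j) (ρ k x) :=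
  Commute.sum_left _ _ _ fun _ _ => (hρ hik _ _).mul_left (hρ hjk _ _)

lemma commute_casimir_of_disjoint (hρ : Pairwise fun i j => ∀ x y, Commute (ρ i x) (ρ j y))
    (J J' : β → L) {i j k l : ι} (hik : i ≠ k) (hil : i ≠ l) (hjk : j ≠ k) (hjl : j ≠ l) :
    Commute (casimir ρ J J' i j) (casimir ρ J J' k l) :=
  Commute.sum_right _ _ _ fun _ _ =>
    (commute_casimir_of_ne hρ _ _ hik hjk _).mul_right (commute_casimir_of_ne hρ _ _ hil hjl _)

variable [DecidableEq β] {κ : LinearMap.BilinForm R L} (J : Module.Basis β R L) {J' : β → L}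

lemma casimir_comm (hρ : Pairwise fun i j => ∀ x y, Commute (ρ i x) (ρ j y))
    (hsymm : ∀ x y, κ x y = κ y x)
    (hdual : ∀ a b, κ (J a) (J' b) = if a = b then (1 : R) else 0) (i j : ι) :
    casimir ρ J J' i j = casimir ρ J J' j i := by
  rcases eq_or_ne i j with rfl | hij
  · rfl
  have h := sum_casimir_swap J hsymm hdual
    ((LinearMap.mul R T).compl₁₂ (ρ j : L →ₗ[R] T) (ρ i))
  simp only [LinearMap.compl₁₂_apply, LinearMap.mul_apply', LieHom.coe_toLinearMap] at h
  rw [casimir, casimir, h]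
  exact sum_congr rfl fun a _ => (hρ hij _ _).eq

lemma commute_casimir_add (hρ : Pairwise fun i j => ∀ x y, Commute (ρ i x) (ρ j y))
    (hinv : ∀ x y w, κ ⁅x, y⁆ w = κ x ⁅y, w⁆) (hnd : κ.Nondegenerate)
    (hdual : ∀ a b, κ (J a) (J' b) = if a = b then (1 : R) else 0)
    {i j : ι} (hij : i ≠ j) (x : L) :
    Commute (casimir ρ J J' i j) (ρ i x + ρ j x) := by
  have h := sum_lie_casimir_eq_zero J hinv hnd hdual
    ((LinearMap.mul R T).compl₁₂ (ρ i : L →ₗ[R] T) (ρ j)) x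
  simp only [LinearMap.compl₁₂_apply, LinearMap.mul_apply', LieHom.coe_toLinearMap] at h
  rw [commute_iff_lie_eq, ← lie_skew, neg_eq_zero, casimir, lie_sum, ← h, ← sum_add_distrib]
  refine sum_congr rfl fun a _ => ?_
  rw [Ring.lie_mul, add_lie, add_lie, ← LieHom.map_lie, ← LieHom.map_lie,
    (hρ hij.symm _ _).lie_eq, (hρ hij _ _).lie_eq, add_zero, zero_add]

lemma casimir_braid (hρ : Pairwise fun i j => ∀ x y, Commute (ρ i x) (ρ j y))
    (hinv : ∀ x y w, κ ⁅x, y⁆ w = κ x ⁅y, w⁆) (hnd : κ.Nondegenerate)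
    (hdual : ∀ a b, κ (J a) (J' b) = if a = b then (1 : R) else 0)
    {i j k : ι} (hij : i ≠ j) (hik : i ≠ k) (hjk : j ≠ k) :
    Commute (casimir ρ J J' i j) (casimir ρ J J' i k + casimir ρ J J' j k) := by
  simp only [casimir, ← sum_add_distrib, ← add_mul]
  exact Commute.sum_right _ _ _ fun a _ =>
    (commute_casimir_add J hρ hinv hnd hdual hij _).mul_right
      (commute_casimir_of_ne hρ _ _ hik hjk _)

end Casimir

section Gaudin

variable {K M ι : Type*} [Field K] [LieRing M] [LieAlgebra K M]

lemma sum_lie_sum_eq_sum_lie_of_ne {s : Finset ι} {f g : ι → M}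
    (h : ∀ m ∈ s, ∀ m' ∈ s, m ≠ m' → ⁅f m, g m'⁆ = 0) :
    ⁅∑ m ∈ s, f m, ∑ m ∈ s, g m⁆ = ∑ m ∈ s, ⁅f m, g m⁆ := by
  rw [sum_lie]
  refine sum_congr rfl fun m hm => ?_
  rw [lie_sum, sum_eq_single_of_mem m hm fun m' hm' hne => h m hm m' hm' hne.symm]

variable {Ω : ι → ι → M}

lemma lie_three_site_eq_zero (hsymm : ∀ i j, Ω i j = Ω j i)
    (hbraid : ∀ {i j k}, i ≠ j → i ≠ k → j ≠ k → ⁅Ω i j, Ω i k + Ω j k⁆ = 0)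
    {z : ι → K} (hz : Function.Injective z) {i j m : ι} (hij : i ≠ j) (hmi : m ≠ i)
    (hmj : m ≠ j) :
    (z j - z i)⁻¹ • (z i - z m)⁻¹ • ⁅Ω i m, Ω i j⁆
      + ((z j - z m)⁻¹ • (z i - z j)⁻¹ • ⁅Ω i j, Ω j m⁆
        + (z j - z m)⁻¹ • (z i - z m)⁻¹ • ⁅Ω i m, Ω j m⁆) = 0 := by
  have hij_jm : ⁅Ω i j, Ω j m⁆ = ⁅Ω i m, Ω i j⁆ := by
    have h := hbraid hij hmi.symm hmj.symm
    rw [lie_add, add_comm, ← eq_neg_iff_add_eq_zero] at h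
    rw [h, lie_skew]
  have him_jm : ⁅Ω i m, Ω j m⁆ = -⁅Ω i m, Ω i j⁆ := by
    rw [hsymm j m, eq_neg_iff_add_eq_zero, add_comm, ← lie_add]
    exact hbraid hmi.symm hij hmj
  have hscalar : (z j - z i)⁻¹ * (z i - z m)⁻¹ + (z j - z m)⁻¹ * (z i - z j)⁻¹
      - (z j - z m)⁻¹ * (z i - z m)⁻¹ = 0 := by
    have := sub_ne_zero.2 (hz.ne hij)
    have := sub_ne_zero.2 (hz.ne hij.symm)
    have := sub_ne_zero.2 (hz.ne hmi.symm)
    have := sub_ne_zero.2 (hz.ne hmj.symm)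
    field_simp
    ring
  rw [hij_jm, him_jm]
  linear_combination (norm := module) hscalar • ⁅Ω i m, Ω i j⁆

variable [Fintype ι] [DecidableEq ι]

theorem lie_gaudin_eq_zero (hsymm : ∀ i j, Ω i j = Ω j i)
    (hbraid : ∀ {i j k}, i ≠ j → i ≠ k → j ≠ k → ⁅Ω i j, Ω i k + Ω j k⁆ = 0)
    (hdisj : ∀ {i j k l}, i ≠ k → i ≠ l → j ≠ k → j ≠ l → ⁅Ω i j, Ω k l⁆ = 0)
    {z : ι → K} (hz : Function.Injective z) (i j : ι) :
    ⁅∑ k ∈ univ.erase i, (z i - z k)⁻¹ • Ω i k, ∑ k ∈ univ.erase j, (z j - z k)⁻¹ • Ω j k⁆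
      = 0 := by
  rcases eq_or_ne i j with rfl | hij
  · exact lie_self _
  set E := (univ.erase i).erase j with hE
  have hmem : ∀ m ∈ E, m ≠ i ∧ m ≠ j := fun m hm => by
    simp only [hE, mem_erase] at hm
    exact ⟨hm.2.1, hm.1⟩
  have hi : ∑ k ∈ univ.erase i, (z i - z k)⁻¹ • Ω i k
      = (z i - z j)⁻¹ • Ω i j + ∑ m ∈ E, (z i - z m)⁻¹ • Ω i m :=
    (add_sum_erase _ _ (mem_erase.2 ⟨hij.symm, mem_univ _⟩)).symm
  have hj : ∑ k ∈ univ.erase j, (z j - z k)⁻¹ • Ω j k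
      = (z j - z i)⁻¹ • Ω i j + ∑ m ∈ E, (z j - z m)⁻¹ • Ω j m := by
    rw [hsymm i j, hE, erase_right_comm]
    exact (add_sum_erase _ (fun k => (z j - z k)⁻¹ • Ω j k) (mem_erase.2 ⟨hij, mem_univ _⟩)).symm
  have hcross : ⁅∑ m ∈ E, (z i - z m)⁻¹ • Ω i m, ∑ m ∈ E, (z j - z m)⁻¹ • Ω j m⁆
      = ∑ m ∈ E, (z j - z m)⁻¹ • (z i - z m)⁻¹ • ⁅Ω i m, Ω j m⁆ := by
    rw [sum_lie_sum_eq_sum_lie_of_ne fun m hm m' hm' hne => ?_]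
    · simp only [lie_smul, smul_lie]
    · rw [lie_smul, smul_lie, hdisj hij (hmem m' hm').1.symm (hmem m hm).2 hne, smul_zero,
        smul_zero]
  rw [hi, hj, lie_add, add_lie, add_lie, hcross]
  simp only [smul_lie, lie_smul, lie_self, smul_zero, zero_add, lie_sum, sum_lie, smul_sum,
    ← sum_add_distrib]
  exact sum_eq_zero fun m hm =>
    lie_three_site_eq_zero hsymm hbraid hz hij (hmem m hm).1 (hmem m hm).2

end Gaudin

section Slots

variable (R L ι : Type*) [CommRing R] [LieRing L] [LieAlgebra R L] [DecidableEq ι]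

def slotRep (i : ι) : L →ₗ⁅R⁆ ⨂[R] _ : ι, UniversalEnvelopingAlgebra R L :=
  (PiTensorProduct.singleAlgHom (R := R) (A := fun _ : ι => UniversalEnvelopingAlgebra R L)
    i).toLieHom.comp (UniversalEnvelopingAlgebra.ι R)

lemma slotRep_commute :
    Pairwise fun i j => ∀ x y, Commute (slotRep R L ι i x) (slotRep R L ι j y) :=
  fun _ _ hij _ _ => (Pi.mulSingle_commute hij _ _).tprod

end Slots

lemma gaudin_eq_sum_casimir {L : Type*} [LieRing L] [LieAlgebra ℂ L] (N d : ℕ) (z : Fin N → ℂ)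
    (J J' : Fin d → L) (i : Fin N) :
    gaudin N d z J J' i
      = ∑ k ∈ univ.erase i, (z i - z k)⁻¹ • casimir (slotRep ℂ L (Fin N)) J J' i k := by
  simp only [gaudin, casimir, smul_sum]
  rfl

theorem gaudin_commute_general {L : Type*} [LieRing L] [LieAlgebra ℂ L]
    (κ : LinearMap.BilinForm ℂ L)
    (hsymm : ∀ x y, κ x y = κ y x)
    (hinv : ∀ x y w, κ ⁅x, y⁆ w = κ x ⁅y, w⁆)
    (hnd : κ.Nondegenerate)
    (d : ℕ) (J : Module.Basis (Fin d) ℂ L) (J' : Fin d → L)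
    (hdual : ∀ a b, κ (J a) (J' b) = if a = b then (1 : ℂ) else 0)
    (N : ℕ) (z : Fin N → ℂ) (hz : Function.Injective z) (i j : Fin N) :
    gaudin N d z (⇑J) J' i * gaudin N d z (⇑J) J' j
      = gaudin N d z (⇑J) J' j * gaudin N d z (⇑J) J' i := by
  have hρ := slotRep_commute ℂ L (Fin N)
  have hlie := lie_gaudin_eq_zero (casimir_comm J hρ hsymm hdual)
    (fun hij hik hjk => (casimir_braid J hρ hinv hnd hdual hij hik hjk).lie_eq)
    (fun hik hil hjk hjl => (commute_casimir_of_disjoint hρ _ _ hik hil hjk hjl).lie_eq) hz i j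
  rw [gaudin_eq_sum_casimir, gaudin_eq_sum_casimir]
  exact (commute_iff_lie_eq.2 hlie).eq

/-- The Gaudin Hamiltonians commute pairwise: `[Ξ_i, Ξ_j] = 0` for all `i, j`. -/
theorem gaudin_commute {L : Type*} [LieRing L] [LieAlgebra ℂ L] [Module.Finite ℂ L]
    [LieAlgebra.IsSimple ℂ L]
    (κ : LinearMap.BilinForm ℂ L)
    (hsymm : ∀ x y, κ x y = κ y x)
    (hinv : ∀ x y w, κ ⁅x, y⁆ w = κ x ⁅y, w⁆)
    (hnd : κ.Nondegenerate)
    (d : ℕ) (J : Module.Basis (Fin d) ℂ L) (J' : Fin d → L)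
    (hdual : ∀ a b, κ (J a) (J' b) = if a = b then (1 : ℂ) else 0)
    (N : ℕ) (z : Fin N → ℂ) (hz : Function.Injective z) (i j : Fin N) :
    gaudin N d z (⇑J) J' i * gaudin N d z (⇑J) J' j
      = gaudin N d z (⇑J) J' j * gaudin N d z (⇑J) J' i :=
  gaudin_commute_general κ hsymm hinv hnd d J J' hdual N z hz i j
end
end

section
/- Let λ_1,...,λ_N ∈ ℂ, z_1,...,z_N distinct complex numbers, and w_1,...,w_m distinct complex numbers disjoint from the z_i. Set u(t) = Σ_{i=1}^N (λ_i/2)/(t−z_i) − Σ_{j=1}^m 1/(t−w_j). Then the rational function v(t) = u(t)² − u'(t) is regular at every point w_j if and only if the sl_2 Bethe Ansatz equations hold: for each j, Σ_{i=1}^N λ_i/(w_j − z_i) − Σ_{s≠j} 2/(w_j − w_s) = 0. -/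
/-!
Fix `j` and split off the pole at `wⱼ`: `u = G - 1/(t - wⱼ)` with `G` holomorphic at `wⱼ`.
The double poles of `u²` and `-u'` cancel, leaving `u² - u' = G² - G' - 2 G(t)/(t - wⱼ)`,
so `v` is regular at `wⱼ` exactly when `G(wⱼ) = 0`, and `2 G(wⱼ)` is the Bethe expression.
-/

open Topology Filter Finset

lemma exists_tendsto_div_sub_iff {h : ℂ → ℂ} {a : ℂ} (hd : DifferentiableAt ℂ h a) :
    (∃ c, Tendsto (fun t => h t / (t - a)) (𝓝[≠] a) (𝓝 c)) ↔ h a = 0 := by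
  constructor
  · rintro ⟨c, hc⟩
    have hsub : Tendsto (fun t => t - a) (𝓝[≠] a) (𝓝 0) := by
      simpa using ((continuous_sub_right a).tendsto a).mono_left nhdsWithin_le_nhds
    have hmul : (fun t => h t / (t - a) * (t - a)) =ᶠ[𝓝[≠] a] h := by
      filter_upwards [self_mem_nhdsWithin] with t ht
      exact div_mul_cancel₀ _ (sub_ne_zero.mpr ht)
    have hzero : Tendsto h (𝓝[≠] a) (𝓝 0) := by
      simpa using (hc.mul hsub).congr' hmul
    exact tendsto_nhds_unique hd.continuousAt.continuousWithinAt hzero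
  · intro ha
    refine ⟨deriv h a, (hasDerivAt_iff_tendsto_slope.mp hd.hasDerivAt).congr fun t => ?_⟩
    rw [slope_def_field, ha, sub_zero]

lemma miura_sub_one_div_sub {G : ℂ → ℂ} {a t : ℂ} (hG : DifferentiableAt ℂ G t) (ht : t ≠ a) :
    (G t - 1 / (t - a)) ^ 2 - deriv (fun s => G s - 1 / (s - a)) t
      = G t ^ 2 - deriv G t - 2 * (G t / (t - a)) := by
  have hta : t - a ≠ 0 := sub_ne_zero.mpr ht
  have hpole : HasDerivAt (fun s => 1 / (s - a)) (-1 / (t - a) ^ 2) t := by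
    simpa only [one_div] using (hasDerivAt_id' t |>.sub_const a).fun_inv hta
  rw [(hG.hasDerivAt.fun_sub hpole).deriv]
  field_simp
  ring

lemma exists_tendsto_miura_iff {G : ℂ → ℂ} {a : ℂ} (hG : AnalyticAt ℂ G a) :
    (∃ c, Tendsto (fun t => (G t - 1 / (t - a)) ^ 2 - deriv (fun s => G s - 1 / (s - a)) t)
      (𝓝[≠] a) (𝓝 c)) ↔ G a = 0 := by
  set K : ℂ → ℂ := fun t => G t ^ 2 - deriv G t
  have hK : Tendsto K (𝓝[≠] a) (𝓝 (K a)) :=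
    ((hG.continuousAt.pow 2).sub hG.deriv.continuousAt).continuousWithinAt
  have hmiura : (fun t => (G t - 1 / (t - a)) ^ 2 - deriv (fun s => G s - 1 / (s - a)) t)
      =ᶠ[𝓝[≠] a] fun t => K t - 2 * (G t / (t - a)) := by
    filter_upwards [hG.eventually_analyticAt.filter_mono nhdsWithin_le_nhds,
      self_mem_nhdsWithin] with t hGt ht
    exact miura_sub_one_div_sub hGt.differentiableAt ht
  rw [← exists_tendsto_div_sub_iff hG.differentiableAt]
  constructor
  · rintro ⟨c, hc⟩
    refine ⟨(K a - c) / 2, ((hK.sub (hc.congr' hmiura)).div_const 2).congr fun t => ?_⟩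
    ring
  · rintro ⟨q, hq⟩
    exact ⟨K a - 2 * q, (hK.sub (hq.const_mul 2)).congr' hmiura.symm⟩

lemma analyticAt_sum_div_sub {ι : Type*} (S : Finset ι) (c p : ι → ℂ) {a : ℂ}
    (ha : ∀ i ∈ S, a ≠ p i) : AnalyticAt ℂ (fun t => ∑ i ∈ S, c i / (t - p i)) a := by
  refine Finset.analyticAt_fun_sum S fun i hi => ?_
  exact analyticAt_const.div (analyticAt_id.sub analyticAt_const) (sub_ne_zero.mpr (ha i hi))

theorem miura_regular_iff_bethe_general (N m : ℕ) (lam : Fin N → ℂ) (z : Fin N → ℂ)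
    (w : Fin m → ℂ) (hw : Function.Injective w)
    (hzw : ∀ i j, z i ≠ w j)
    (u v : ℂ → ℂ)
    (hu : u = fun t => (∑ i, lam i / 2 / (t - z i)) - ∑ j, 1 / (t - w j))
    (hv : v = fun t => u t ^ 2 - deriv u t) :
    (∀ j, ∃ c : ℂ, Tendsto v (𝓝[≠] (w j)) (𝓝 c)) ↔
      (∀ j, (∑ i, lam i / (w j - z i))
          - ∑ s ∈ Finset.univ.erase j, 2 / (w j - w s) = 0) := by
  subst hv
  refine forall_congr' fun j => ?_
  set G : ℂ → ℂ := fun t =>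
    (∑ i, lam i / 2 / (t - z i)) - ∑ s ∈ univ.erase j, 1 / (t - w s)
  have hsplit : u = fun t => G t - 1 / (t - w j) := by
    funext t
    simp only [hu, G]
    rw [← add_sum_erase univ (fun s => 1 / (t - w s)) (mem_univ j)]
    ring
  have hG : AnalyticAt ℂ G (w j) :=
    (analyticAt_sum_div_sub _ _ z fun i _ => (hzw i j).symm).sub
      (analyticAt_sum_div_sub _ _ w fun s hs => hw.ne (ne_of_mem_erase hs).symm)
  have hbethe : (∑ i, lam i / (w j - z i)) - ∑ s ∈ univ.erase j, 2 / (w j - w s)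
      = 2 * G (w j) := by
    simp only [G, mul_sub, mul_sum]
    congr 1 <;> exact sum_congr rfl fun _ _ => by ring
  rw [hsplit, exists_tendsto_miura_iff hG, hbethe, mul_eq_zero, or_iff_right two_ne_zero]

/-- Let `u(t) = Σᵢ (λᵢ/2)/(t−zᵢ) − Σⱼ 1/(t−wⱼ)` with all the points distinct. Then
`v = u² − u'` is regular (extends continuously) at every `wⱼ` if and only if the
`sl₂` Bethe Ansatz equations hold:
`Σᵢ λᵢ/(wⱼ−zᵢ) − Σ_{s≠j} 2/(wⱼ−w_s) = 0` for every `j`. -/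
theorem miura_regular_iff_bethe (N m : ℕ) (lam : Fin N → ℂ) (z : Fin N → ℂ)
    (w : Fin m → ℂ) (hz : Function.Injective z) (hw : Function.Injective w)
    (hzw : ∀ i j, z i ≠ w j)
    (u v : ℂ → ℂ)
    (hu : u = fun t => (∑ i, lam i / 2 / (t - z i)) - ∑ j, 1 / (t - w j))
    (hv : v = fun t => u t ^ 2 - deriv u t) :
    (∀ j, ∃ c : ℂ, Tendsto v (𝓝[≠] (w j)) (𝓝 c)) ↔
      (∀ j, (∑ i, lam i / (w j - z i))
          - ∑ s ∈ Finset.univ.erase j, 2 / (w j - w s) = 0) :=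
  miura_regular_iff_bethe_general N m lam z w hw hzw u v hu hv
end

section
/- Let u(t) = Σ_{i=1}^N (λ_i/2)/(t−z_i) − Σ_{j=1}^m 1/(t−w_j) with all points distinct, and suppose the sl_2 Bethe equations hold. Then v(t) = u(t)² − u'(t) has the partial fraction form v(t) = Σ_{i=1}^N [λ_i(λ_i+2)/4]/(t−z_i)² + Σ_{i=1}^N c_i/(t−z_i), where c_i = λ_i ( Σ_{j≠i} (λ_j/2)/(z_i−z_j) − Σ_{j=1}^m 1/(z_i−w_j) ). -/
/-!
Regard the zeros `wⱼ` as further simple poles of `u`, with residue `-1`, so that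
`u = Σₖ aₖ / (t - pₖ)` over all poles. Splitting each cross product
`aₖ aₗ / ((t - pₖ)(t - pₗ))` into partial fractions gives
`u² - u' =
  Σₖ aₖ (aₖ + 1) / (t - pₖ)² + Σₖ 2 aₖ (Σ_{l ≠ k} aₗ / (pₖ - pₗ)) / (t - pₖ)`.
At `wⱼ` the double-pole coefficient `(-1) · 0` vanishes, and the residue is minus the
difference of the two sides of the `j`-th Bethe equation. At `zᵢ` one reads off
`(λᵢ/2)(λᵢ/2 + 1) = λᵢ(λᵢ + 2)/4` and `cᵢ`.
-/

open Finset

section PartialFractions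

variable {ι : Type*} [Fintype ι]

theorem Finset.sum_sum_erase_comm [DecidableEq ι] {M : Type*} [AddCommMonoid M]
    (f : ι → ι → M) :
    ∑ k, ∑ l ∈ univ.erase k, f l k = ∑ k, ∑ l ∈ univ.erase k, f k l :=
  sum_comm' fun l k => by simp [ne_comm]

theorem div_sub_mul_div_sub {K : Type*} [Field K] {p q t : K} (a b : K) (hpq : p ≠ q)
    (hp : t ≠ p) (hq : t ≠ q) :
    a / (t - p) * (b / (t - q)) = a * b / (p - q) / (t - p) + b * a / (q - p) / (t - q) := by
  have := sub_ne_zero.2 hpq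
  have := sub_ne_zero.2 hpq.symm
  have := sub_ne_zero.2 hp
  have := sub_ne_zero.2 hq
  field_simp
  ring

theorem sq_sum_div_sub [DecidableEq ι] {K : Type*} [Field K] (a : ι → K) {p : ι → K}
    (hp : Function.Injective p) {t : K} (ht : ∀ k, t ≠ p k) :
    (∑ k, a k / (t - p k)) ^ 2 = ∑ k, a k ^ 2 / (t - p k) ^ 2
      + ∑ k, 2 * a k * (∑ l ∈ univ.erase k, a l / (p k - p l)) / (t - p k) := by
  set g : ι → ι → K := fun k l => a k * a l / (p k - p l) / (t - p k)
  have hcross : ∀ k, ∀ l ∈ univ.erase k,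
      a k / (t - p k) * (a l / (t - p l)) = g k l + g l k :=
    fun k l hl => div_sub_mul_div_sub _ _ (hp.ne (mem_erase.1 hl).1.symm) (ht k) (ht l)
  have hres : ∀ k, 2 * ∑ l ∈ univ.erase k, g k l
      = 2 * a k * (∑ l ∈ univ.erase k, a l / (p k - p l)) / (t - p k) := fun k => by
    simp only [g, mul_sum, sum_div]
    exact sum_congr rfl fun l _ => by ring
  calc (∑ k, a k / (t - p k)) ^ 2
      = ∑ k, (a k / (t - p k) * (a k / (t - p k))
          + ∑ l ∈ univ.erase k, a k / (t - p k) * (a l / (t - p l))) := by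
        rw [sq, sum_mul_sum]
        exact sum_congr rfl fun k _ => (add_sum_erase _ _ (mem_univ k)).symm
    _ = ∑ k, a k ^ 2 / (t - p k) ^ 2
          + (∑ k, ∑ l ∈ univ.erase k, g k l + ∑ k, ∑ l ∈ univ.erase k, g l k) := by
        rw [sum_add_distrib, ← sum_add_distrib (f := fun k => ∑ l ∈ univ.erase k, g k l)]
        congr 1
        · exact sum_congr rfl fun k _ => by rw [← sq, div_pow]
        · exact sum_congr rfl fun k _ => (sum_congr rfl (hcross k)).trans sum_add_distrib
    _ = _ := by
        rw [sum_sum_erase_comm g, ← two_mul, mul_sum]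
        simp only [hres]

theorem hasDerivAt_sum_div_sub {𝕜 : Type*} [NontriviallyNormedField 𝕜] (a p : ι → 𝕜)
    {t : 𝕜} (ht : ∀ k, t ≠ p k) :
    HasDerivAt (fun s => ∑ k, a k / (s - p k)) (-∑ k, a k / (t - p k) ^ 2) t := by
  rw [← sum_neg_distrib]
  refine HasDerivAt.fun_sum fun k _ => ?_
  refine ((hasDerivAt_const t (a k)).fun_div ((hasDerivAt_id' t).sub_const (p k))
    (sub_ne_zero.2 (ht k))).congr_deriv ?_
  ring

theorem sq_sub_deriv_sum_div_sub [DecidableEq ι] {𝕜 : Type*} [NontriviallyNormedField 𝕜]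
    (a : ι → 𝕜) {p : ι → 𝕜} (hp : Function.Injective p) {t : 𝕜} (ht : ∀ k, t ≠ p k) :
    (∑ k, a k / (t - p k)) ^ 2 - deriv (fun s => ∑ k, a k / (s - p k)) t
      = ∑ k, a k * (a k + 1) / (t - p k) ^ 2
        + ∑ k, 2 * a k * (∑ l ∈ univ.erase k, a l / (p k - p l)) / (t - p k) := by
  rw [sq_sum_div_sub a hp ht, (hasDerivAt_sum_div_sub a p ht).deriv, sub_neg_eq_add,
    add_right_comm, ← sum_add_distrib]
  congr 1
  exact sum_congr rfl fun k _ => by ring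

end PartialFractions

theorem Finset.sum_univ_erase_inl {α β M : Type*} [Fintype α] [Fintype β] [DecidableEq α]
    [DecidableEq β] [AddCommGroup M] (f : α ⊕ β → M) (i : α) :
    ∑ l ∈ univ.erase (Sum.inl i), f l =
      ∑ j ∈ univ.erase i, f (Sum.inl j) + ∑ j, f (Sum.inr j) := by
  rw [sum_erase_eq_sub (mem_univ _), sum_erase_eq_sub (mem_univ _), Fintype.sum_sum_type]
  abel

theorem Finset.sum_univ_erase_inr {α β M : Type*} [Fintype α] [Fintype β] [DecidableEq α]
    [DecidableEq β] [AddCommGroup M] (f : α ⊕ β → M) (j : β) :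
    ∑ l ∈ univ.erase (Sum.inr j), f l =
      ∑ i, f (Sum.inl i) + ∑ s ∈ univ.erase j, f (Sum.inr s) := by
  rw [sum_erase_eq_sub (mem_univ _), sum_erase_eq_sub (mem_univ _), Fintype.sum_sum_type]
  abel

/-- If the `sl₂` Bethe Ansatz equations hold, then
`v = u² − u'` with `u(t) = Σᵢ (λᵢ/2)/(t−zᵢ) − Σⱼ 1/(t−wⱼ)` has the partial fraction
form `v(t) = Σᵢ [λᵢ(λᵢ+2)/4]/(t−zᵢ)² + Σᵢ cᵢ/(t−zᵢ)` with
`cᵢ = λᵢ (Σ_{j≠i} (λⱼ/2)/(zᵢ−zⱼ) − Σⱼ 1/(zᵢ−wⱼ))`. -/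
theorem miura_partial_fractions (N m : ℕ) (lam : Fin N → ℂ) (z : Fin N → ℂ)
    (w : Fin m → ℂ) (hz : Function.Injective z) (hw : Function.Injective w)
    (hzw : ∀ i j, z i ≠ w j)
    (u v : ℂ → ℂ)
    (hu : u = fun t => (∑ i, lam i / 2 / (t - z i)) - ∑ j, 1 / (t - w j))
    (hv : v = fun t => u t ^ 2 - deriv u t)
    (hbethe : ∀ j, (∑ i, lam i / (w j - z i))
        = ∑ s ∈ Finset.univ.erase j, 2 / (w j - w s))
    (c : Fin N → ℂ)
    (hc : ∀ i, c i = lam i *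
        ((∑ j ∈ Finset.univ.erase i, lam j / 2 / (z i - z j)) - ∑ j, 1 / (z i - w j))) :
    ∀ t : ℂ, (∀ i, t ≠ z i) → (∀ j, t ≠ w j) →
      v t = (∑ i, lam i * (lam i + 2) / 4 / (t - z i) ^ 2) + ∑ i, c i / (t - z i) := by
  intro t htz htw
  set a : Fin N ⊕ Fin m → ℂ := Sum.elim (fun i => lam i / 2) (fun _ => -1)
  set p : Fin N ⊕ Fin m → ℂ := Sum.elim z w
  have hp : Function.Injective p := hz.sumElim hw hzw
  have ht : ∀ k, t ≠ p k := Sum.forall.2 ⟨htz, htw⟩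
  have hu' : u = fun s => ∑ k, a k / (s - p k) := by
    rw [hu]
    funext s
    simp [a, p, Fintype.sum_sum_type, neg_div, sub_eq_add_neg]
  have hz_double : ∀ i, a (.inl i) * (a (.inl i) + 1) = lam i * (lam i + 2) / 4 := fun i => by
    simp only [a, Sum.elim_inl]
    ring
  have hw_double : ∀ j, a (.inr j) * (a (.inr j) + 1) = 0 := by simp [a]
  have hz_res : ∀ i,
      2 * a (.inl i) * (∑ l ∈ univ.erase (.inl i), a l / (p (.inl i) - p l)) = c i := by
    intro i
    rw [hc, sum_univ_erase_inl]
    simp only [a, p, Sum.elim_inl, Sum.elim_inr, neg_div, sum_neg_distrib]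
    ring
  have hw_res : ∀ j,
      2 * a (.inr j) * (∑ l ∈ univ.erase (.inr j), a l / (p (.inr j) - p l)) = 0 := by
    intro j
    have h := hbethe j
    simp only [← mul_one_div (2 : ℂ), ← mul_sum] at h
    rw [sum_univ_erase_inr]
    simp only [a, p, Sum.elim_inl, Sum.elim_inr, div_right_comm _ (2 : ℂ), ← sum_div, neg_div,
      sum_neg_distrib]
    linear_combination (-1 : ℂ) * h
  rw [hv, hu']
  dsimp only
  rw [sq_sub_deriv_sum_div_sub a hp ht, Fintype.sum_sum_type, Fintype.sum_sum_type]
  simp only [hz_double, hw_double, hz_res, hw_res, zero_div, sum_const_zero, add_zero]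
  rfl
end

section
/- In the setting of the sl_2 Bethe vector, if the Bethe Ansatz equations Σ_{i=1}^N λ_i/(w_j − z_i) = Σ_{s≠j} 2/(w_j − w_s) hold for all j = 1,...,m, then the Bethe vector φ(w_1,...,w_m) = f(w_1)···f(w_m)(v_{λ_1}⊗···⊗v_{λ_N}) is annihilated by the diagonal action of e: (Σ_k e^{(k)})·φ(w_1,...,w_m) = 0. -/
open Finset in
lemma aux_sum_commutator {R : Type*} [Ring R] [Algebra ℂ R] {n : ℕ}
    (A B : Fin n → R) (hc : ∀ i j, i ≠ j → Commute (A i) (B j)) (a b : Fin n → ℂ) :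
    (∑ i, a i • A i) * (∑ j, b j • B j) - (∑ j, b j • B j) * (∑ i, a i • A i)
      = ∑ i, (a i * b i) • (A i * B i - B i * A i) := by
  rw [Finset.sum_mul_sum, Finset.sum_mul_sum, Finset.sum_comm (γ := Fin n)]
  rw [← Finset.sum_sub_distrib]
  refine Finset.sum_congr rfl fun i _ => ?_
  rw [← Finset.sum_sub_distrib, Finset.sum_eq_single i]
  · simp only [smul_mul_assoc, mul_smul_comm, smul_smul, smul_sub]
    rw [mul_comm (b i) (a i)]
  · intro j _ hji
    have h := (hc j i hji).eq
    simp only [smul_mul_assoc, mul_smul_comm, smul_smul, h]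
    rw [mul_comm (b i) (a j), sub_self]
  · simp

lemma aux_noncommProd_congr {M : Type*} [Monoid M] {s t : Multiset M} (h : s = t) (c) :
    s.noncommProd c = t.noncommProd (h ▸ c) := by subst h; rfl

/-- If the `sl₂` Bethe Ansatz equations `Σᵢ λᵢ/(wⱼ−zᵢ) = Σ_{s≠j} 2/(wⱼ−w_s)` hold,
then the Bethe vector `φ(w₁,…,w_m) = f(w₁)⋯f(w_m)(v_{λ₁} ⊗ ⋯ ⊗ v_{λ_N})` is
annihilated by the diagonal action of `e`. -/
theorem bethe_vector_singular
    (V : Type*) [AddCommGroup V] [Module ℂ V]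
    (N : ℕ) (E H F : Fin N → Module.End ℂ V)
    (hcomm : ∀ i j, i ≠ j → ∀ X ∈ ({E i, H i, F i} : Set (Module.End ℂ V)),
        ∀ Y ∈ ({E j, H j, F j} : Set (Module.End ℂ V)), Commute X Y)
    (hHE : ∀ i, H i * E i - E i * H i = (2 : ℂ) • E i)
    (hHF : ∀ i, H i * F i - F i * H i = (-2 : ℂ) • F i)
    (hEF : ∀ i, E i * F i - F i * E i = H i)
    (lam : Fin N → ℂ) (v : V)
    (hwt : ∀ i, H i v = lam i • v) (hhw : ∀ i, E i v = 0)
    (z : Fin N → ℂ) (m : ℕ) (w : Fin m → ℂ)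
    (hz : Function.Injective z) (hw : Function.Injective w)
    (hzw : ∀ i j, z i ≠ w j)
    (hbethe : ∀ j, (∑ i, lam i / (w j - z i))
        = ∑ s ∈ Finset.univ.erase j, 2 / (w j - w s))
    (fop : ℂ → Module.End ℂ V) (hfop : fop = fun x => ∑ i, (x - z i)⁻¹ • F i)
    (phi : V) (hphi : phi = (List.ofFn fun j => fop (w j)).prod v) :
    (∑ k, E k) phi = 0 := by
  classical
  have hfx : ∀ x, fop x = ∑ i, (x - z i)⁻¹ • F i := fun x => by rw [hfop]
  -- commutation of the F's and of the fop's
  have hFF : ∀ i j, Commute (F i) (F j) := by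
    intro i j
    rcases eq_or_ne i j with rfl | h
    · exact Commute.refl _
    · exact hcomm i j h (F i) (by simp) (F j) (by simp)
  have hff : ∀ x y, Commute (fop x) (fop y) := by
    intro x y
    rw [hfx, hfx]
    exact Commute.sum_left _ _ _ fun i _ =>
      Commute.sum_right _ _ _ fun j _ => ((hFF i j).smul_left _).smul_right _
  -- auxiliary operators
  set Ed : Module.End ℂ V := ∑ k, E k with hEd
  set Hop : ℂ → Module.End ℂ V := fun x => ∑ i, (x - z i)⁻¹ • H i with hHop
  set Lam : ℂ → ℂ := fun x => ∑ i, (x - z i)⁻¹ * lam i with hLam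
  -- the commutator [Ed, fop x] = Hop x
  have lem1 : ∀ x, Ed * fop x - fop x * Ed = Hop x := by
    intro x
    rw [hfx, hHop]
    have h1 : Ed = ∑ k, (1 : ℂ) • E k := by simp [hEd]
    rw [h1, aux_sum_commutator E F
      (fun i j hij => hcomm i j hij (E i) (by simp) (F j) (by simp)) _ _]
    refine Finset.sum_congr rfl fun i _ => ?_
    rw [hEF i, one_mul]
  -- the commutator [Hop x, fop y] = (2/(x-y)) • (fop x - fop y)
  have lem2 : ∀ x y, x ≠ y → (∀ i, x ≠ z i) → (∀ i, y ≠ z i) →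
      Hop x * fop y - fop y * Hop x = (2 / (x - y)) • (fop x - fop y) := by
    intro x y hxy hxz hyz
    rw [hfx, hfx, hHop]
    rw [aux_sum_commutator H F
      (fun i j hij => hcomm i j hij (H i) (by simp) (F j) (by simp)) _ _]
    rw [← Finset.sum_sub_distrib, Finset.smul_sum]
    refine Finset.sum_congr rfl fun i _ => ?_
    rw [hHF i, smul_smul, ← sub_smul, smul_smul]
    congr 1
    have h1 : x - y ≠ 0 := sub_ne_zero.mpr hxy
    have h2 : x - z i ≠ 0 := sub_ne_zero.mpr (hxz i)
    have h3 : y - z i ≠ 0 := sub_ne_zero.mpr (hyz i)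
    field_simp
    ring
  -- applied forms of the commutators
  have lem1' : ∀ x (u : V), Ed (fop x u) = fop x (Ed u) + Hop x u := by
    intro x u
    have h := lem1 x
    rw [sub_eq_iff_eq_add] at h
    have := congrArg (fun (T : Module.End ℂ V) => T u) h
    simpa [Module.End.mul_apply, add_comm] using this
  have lem2' : ∀ x y, x ≠ y → (∀ i, x ≠ z i) → (∀ i, y ≠ z i) → ∀ u : V,
      Hop x (fop y u) = fop y (Hop x u) + (2 / (x - y)) • (fop x u - fop y u) := by
    intro x y hxy hxz hyz u
    have h := lem2 x y hxy hxz hyz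
    rw [sub_eq_iff_eq_add] at h
    have := congrArg (fun (T : Module.End ℂ V) => T u) h
    simpa [Module.End.mul_apply, add_comm] using this
  -- Hop x on the highest weight vector
  have hHv : ∀ x, Hop x v = Lam x • v := by
    intro x
    rw [hHop, hLam]
    simp only [LinearMap.coe_sum, Finset.sum_apply, LinearMap.smul_apply, hwt,
      smul_smul, Finset.sum_smul]
  have hEv : Ed v = 0 := by
    rw [hEd]
    simp [hhw]
  -- the partial Bethe products
  set P : Finset (Fin m) → Module.End ℂ V :=
    fun S => S.noncommProd (fun j => fop (w j)) (fun x _ y _ _ => hff (w x) (w y)) with hPdef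
  have hPins : ∀ (a : Fin m) (S : Finset (Fin m)), a ∉ S →
      P (insert a S) = fop (w a) * P S := by
    intro a S ha
    exact Finset.noncommProd_insert_of_notMem S a _ _ ha
  have hPempty : P ∅ = 1 := Finset.noncommProd_empty _ _
  -- pass Hop x through a Bethe product
  have hHpass : ∀ (x : ℂ), (∀ i, x ≠ z i) → ∀ S : Finset (Fin m), (∀ s ∈ S, x ≠ w s) →
      Hop x (P S v) = Lam x • P S v
        + ∑ s ∈ S, (2 / (x - w s)) • (fop x (P (S.erase s) v) - P S v) := by
    intro x hxz S
    induction S using Finset.induction_on with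
    | empty =>
      intro _
      rw [hPempty]
      simp [hHv x]
    | @insert b S' hb ih =>
      intro hxs
      have hxb : x ≠ w b := hxs b (Finset.mem_insert_self b S')
      have hwbz : ∀ i, w b ≠ z i := fun i => (hzw i b).symm
      rw [hPins b S' hb]
      rw [Module.End.mul_apply, lem2' x (w b) hxb hxz hwbz (P S' v),
        ih (fun s hs => hxs s (Finset.mem_insert_of_mem hs))]
      rw [map_add, map_smul, map_sum]
      have hterm : ∀ s ∈ S', fop (w b) ((2 / (x - w s)) • (fop x (P (S'.erase s) v) - P S' v))
          = (2 / (x - w s)) • (fop x (P ((insert b S').erase s) v) - P (insert b S') v) := by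
        intro s hs
        have hsb : s ≠ b := fun h => hb (h ▸ hs)
        rw [map_smul, map_sub]
        congr 2
        · -- fop (w b) (fop x u) = fop x (fop (w b) u), then insert
          have hcom := (hff (w b) x).eq
          have h1 : fop (w b) (fop x (P (S'.erase s) v)) = fop x (fop (w b) (P (S'.erase s) v)) := by
            have := congrArg (fun (T : Module.End ℂ V) => T (P (S'.erase s) v)) hcom
            simpa [Module.End.mul_apply, add_comm] using this
          rw [h1]
          congr 1
          have herase : (insert b S').erase s = insert b (S'.erase s) :=
            Finset.erase_insert_of_ne hsb.symm
          rw [herase, hPins b (S'.erase s) (fun h => hb (Finset.mem_of_mem_erase h)),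
            Module.End.mul_apply]
        · rw [hPins b S' hb, Module.End.mul_apply]
      rw [Finset.sum_congr rfl hterm]
      rw [Finset.sum_insert hb, Finset.erase_insert hb]
      rw [← Module.End.mul_apply (fop (w b)) (P S'), ← hPins b S' hb]
      abel
  -- main identity: Ed through a Bethe product
  have hEpass : ∀ S : Finset (Fin m),
      Ed (P S v) = ∑ j ∈ S,
        (Lam (w j) - ∑ s ∈ S.erase j, 2 / (w j - w s)) • P (S.erase j) v := by
    intro S
    induction S using Finset.induction_on with
    | empty =>
      rw [hPempty]
      simpa using hEv
    | @insert a S' ha ih =>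
      have hwaz : ∀ i, w a ≠ z i := fun i => (hzw i a).symm
      have hwas : ∀ s ∈ S', w a ≠ w s := by
        intro s hs h
        exact ha ((hw h) ▸ hs)
      rw [hPins a S' ha, Module.End.mul_apply, lem1' (w a) (P S' v), ih,
        hHpass (w a) hwaz S' hwas]
      rw [map_sum]
      -- rewrite the fop (w a) images as products over bigger sets
      have hterm1 : ∀ j ∈ S',
          fop (w a) ((Lam (w j) - ∑ s ∈ S'.erase j, 2 / (w j - w s)) • P (S'.erase j) v)
          = (Lam (w j) - ∑ s ∈ S'.erase j, 2 / (w j - w s)) • P ((insert a S').erase j) v := by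
        intro j hj
        have hja : j ≠ a := fun h => ha (h ▸ hj)
        rw [map_smul]
        congr 1
        rw [Finset.erase_insert_of_ne hja.symm,
          hPins a (S'.erase j) (fun h => ha (Finset.mem_of_mem_erase h)),
          Module.End.mul_apply]
      rw [Finset.sum_congr rfl hterm1]
      have hterm2 : ∀ s ∈ S',
          (2 / (w a - w s)) • (fop (w a) (P (S'.erase s) v) - P S' v)
          = (2 / (w a - w s)) • P ((insert a S').erase s) v
            - (2 / (w a - w s)) • P S' v := by
        intro s hs
        have hsa : s ≠ a := fun h => ha (h ▸ hs)
        rw [smul_sub]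
        congr 2
        rw [Finset.erase_insert_of_ne hsa.symm,
          hPins a (S'.erase s) (fun h => ha (Finset.mem_of_mem_erase h)),
          Module.End.mul_apply]
      rw [Finset.sum_congr rfl hterm2]
      -- now compare with the RHS
      rw [Finset.sum_insert ha, Finset.erase_insert ha]
      have hRHSterm : ∀ j ∈ S',
          (Lam (w j) - ∑ s ∈ (insert a S').erase j, 2 / (w j - w s)) • P ((insert a S').erase j) v
          = (Lam (w j) - ∑ s ∈ S'.erase j, 2 / (w j - w s)) • P ((insert a S').erase j) v
            + (2 / (w a - w j)) • P ((insert a S').erase j) v := by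
        intro j hj
        have hja : j ≠ a := fun h => ha (h ▸ hj)
        have h1 : (insert a S').erase j = insert a (S'.erase j) :=
          Finset.erase_insert_of_ne hja.symm
        have h2 : a ∉ S'.erase j := fun h => ha (Finset.mem_of_mem_erase h)
        rw [h1]
        nth_rewrite 1 [Finset.sum_insert h2]
        rw [← h1, ← add_smul]
        congr 1
        have h3 : 2 / (w j - w a) = -(2 / (w a - w j)) := by
          rw [show w j - w a = -(w a - w j) from by ring, div_neg]
        rw [h3]
        ring
      rw [Finset.sum_congr rfl hRHSterm, Finset.sum_add_distrib,
        Finset.sum_sub_distrib, sub_smul, Finset.sum_smul, Finset.sum_smul]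
      abel
  -- identify phi with P univ v
  have hPuniv : phi = P Finset.univ v := by
    rw [hphi, hPdef]
    congr 1
    exact ((aux_noncommProd_congr (Fin.univ_val_map _) _).trans
      (Multiset.noncommProd_coe _ _)).symm
  -- conclude using the Bethe equations
  rw [hPuniv, hEpass Finset.univ]
  refine Finset.sum_eq_zero fun j _ => ?_
  have hb := hbethe j
  have hL : Lam (w j) = ∑ i, lam i / (w j - z i) := by
    rw [hLam]
    refine Finset.sum_congr rfl fun i _ => ?_
    rw [div_eq_mul_inv, mul_comm]
  have : Lam (w j) - ∑ s ∈ Finset.univ.erase j, 2 / (w j - w s) = 0 := by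
    rw [hL, hb, sub_self]
  rw [this, zero_smul]
end
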